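/- arXiv:2203.13857 — 5 statements merged into one kernel-verified Lean document; each statement's English description precedes it below -/
import Mathlib

section
/- Let α : Fin n → ℝ and let H_α be the n×n complex Hermitian matrix with (H_α)_{j, j+1} = exp(i·α(j)), (H_α)_{j+1, j} = exp(-i·α(j)) for indices taken modulo n, and all other entries zero (the Hermitian adjacency matrix of an oriented n-cycle). If the sum of all α(j) is π (so the product of the weights around the cycle is -1) and n = 2m is even, then the characteristic polynomial of H_α equals the characteristic polynomial of the adjacency matrix of the undirected n-cycle plus the constant 4. -/
open Complex

/-- The Hermitian adjacency matrix of an oriented `n`-cycle: the arc from `j` to `j+1`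
(modulo `n`) receives weight `exp(i α j)`, and the reverse arc its conjugate. -/
noncomputable def cycleH (n : ℕ) (α : Fin n → ℝ) : Matrix (Fin n) (Fin n) ℂ :=
  fun j k =>
    (if (k : ℕ) = ((j : ℕ) + 1) % n then Complex.exp (Complex.I * (α j)) else 0) +
    (if (j : ℕ) = ((k : ℕ) + 1) % n then Complex.exp (-(Complex.I * (α k))) else 0)

/-- The adjacency matrix of the undirected `n`-cycle, over `ℂ`. -/
def cycleAdj (n : ℕ) : Matrix (Fin n) (Fin n) ℂ :=
  fun j k =>
    (if (k : ℕ) = ((j : ℕ) + 1) % n then 1 else 0) +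
    (if (j : ℕ) = ((k : ℕ) + 1) % n then 1 else 0)

/-!
Conjugating by the unitary diagonal matrix `diag(exp(i φ j))`, where the potential `φ`
spreads the total phase `∑ α = π` evenly over the `n` arcs, turns `H_α` into
`w S + w⁻¹ Sᵀ` with `S` the cyclic shift and `w = exp(iπ/n)`, so `w ^ n = -1`; the undirected
cycle is the case `w = 1`. Writing `x = u + u⁻¹`,
`(x - w S - w⁻¹ Sᵀ) S = -w⁻¹ (u - w S)(u⁻¹ - w S)`, and `charpoly S = X ^ n - 1` then gives
`det (x - w S - w⁻¹ Sᵀ) = uⁿ + u⁻ⁿ - wⁿ - w⁻ⁿ`, so only the constant term depends on `w`.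
-/

open Matrix Polynomial

section CycleShift

variable (R : Type*) (n : ℕ) [NeZero n]

def cycleShift [Zero R] [One R] : Matrix (Fin n) (Fin n) R :=
  (Equiv.addRight (1 : Fin n)).permMatrix R

variable {R n}

lemma cycleShift_apply [Zero R] [One R] (i j : Fin n) :
    cycleShift R n i j = if i + 1 = j then 1 else 0 := by
  simp [cycleShift, PEquiv.toMatrix_apply]

lemma cycleShift_transpose_mul_self [CommRing R] : (cycleShift R n)ᵀ * cycleShift R n = 1 := by
  rw [cycleShift, transpose_permMatrix, ← permMatrix_mul, mul_inv_cancel, permMatrix_one]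

lemma charmatrix_cycleShift_mulVec [CommRing R] (i : Fin n) :
    (charmatrix (cycleShift R n) *ᵥ fun j => X ^ (j : ℕ)) i =
      X ^ ((i : ℕ) + 1) - X ^ (((i : ℕ) + 1) % n) := by
  have hC : (C : R →+* R[X]).mapMatrix (cycleShift R n) = cycleShift R[X] n := by
    ext i j
    simp [cycleShift_apply]
  simp only [charmatrix]
  rw [sub_mulVec, hC, cycleShift, permMatrix_mulVec]
  simp [pow_succ', Fin.val_add]

lemma X_pow_sub_one_dvd_charmatrix_cycleShift_mulVec [CommRing R] (i : Fin n) :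
    X ^ n - 1 ∣ (charmatrix (cycleShift R n) *ᵥ fun j => X ^ (j : ℕ)) i := by
  rw [charmatrix_cycleShift_mulVec]
  rcases Nat.lt_or_eq_of_le (Nat.succ_le_of_lt i.isLt) with h | h
  · rw [Nat.mod_eq_of_lt h, sub_self]
    exact dvd_zero _
  · rw [Nat.succ_eq_add_one] at h
    rw [h, Nat.mod_self, pow_zero]

/- Cramer's rule on the vector `(X ^ j)_j`, whose `0`-th entry is `1`, shows that `X ^ n - 1`
divides the determinant; both polynomials are monic of degree `n`. -/
theorem charpoly_cycleShift [CommRing R] : (cycleShift R n).charpoly = X ^ n - 1 := by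
  nontriviality R
  set A := charmatrix (cycleShift R n)
  have hdet : A.det = (A.adjugate *ᵥ (A *ᵥ fun j => X ^ (j : ℕ))) 0 := by
    rw [mulVec_mulVec, adjugate_mul, smul_mulVec, one_mulVec]
    simp
  have hmonic : (X ^ n - 1 : R[X]).Monic := by
    simpa using monic_X_pow_sub_C (1 : R) (NeZero.ne n)
  refine eq_of_monic_of_dvd_of_natDegree_le hmonic (cycleShift R n).charpoly_monic ?_ ?_
  · rw [charpoly, hdet, mulVec, dotProduct]
    refine Finset.dvd_sum fun j _ => ?_
    exact (X_pow_sub_one_dvd_charmatrix_cycleShift_mulVec j).mul_left _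
  · simpa using (natDegree_X_pow_sub_C (n := n) (r := (1 : R))).ge

lemma det_cycleShift [CommRing R] : det (cycleShift R n) = -(-1) ^ n := by
  rw [det_eq_sign_charpoly_coeff, charpoly_cycleShift, Fintype.card_fin]
  simp [coeff_X_pow, (NeZero.ne n).symm]

end CycleShift

section WeightedCycle

variable {K : Type*} [Field K] {n : ℕ} [NeZero n]

lemma det_smul_one_sub_smul_cycleShift (b w : K) :
    det (b • 1 - w • cycleShift K n) = b ^ n - w ^ n := by
  rcases eq_or_ne w 0 with rfl | hw
  · simp [zero_pow (NeZero.ne n)]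
  have h := eval_charpoly (cycleShift K n) (b / w)
  rw [charpoly_cycleShift, eval_sub, eval_pow, eval_X, eval_one, scalar_apply,
    ← smul_one_eq_diagonal] at h
  have hsmul := det_smul ((b / w) • 1 - cycleShift K n) w
  rw [Fintype.card_fin, smul_sub, smul_smul, mul_div_cancel₀ _ hw, ← h, div_pow] at hsmul
  rw [hsmul]
  field_simp

variable (K n) in
def weightedCycle (w : K) : Matrix (Fin n) (Fin n) K :=
  w • cycleShift K n + w⁻¹ • (cycleShift K n)ᵀ

lemma smul_one_sub_weightedCycle_mul_cycleShift {u w : K} (hu : u ≠ 0) (hw : w ≠ 0) :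
    ((u + u⁻¹) • 1 - weightedCycle K n w) * cycleShift K n =
      (-w⁻¹) • ((u • 1 - w • cycleShift K n) * (u⁻¹ • 1 - w • cycleShift K n)) := by
  simp only [weightedCycle, add_mul, sub_mul, mul_sub, smul_mul_assoc, mul_smul_comm, one_mul,
    mul_one, cycleShift_transpose_mul_self, smul_sub]
  match_scalars <;> field_simp
  ring

lemma eval_add_inv_charpoly_weightedCycle {u w : K} (hu : u ≠ 0) (hw : w ≠ 0) :
    (weightedCycle K n w).charpoly.eval (u + u⁻¹) = u ^ n + u⁻¹ ^ n - w ^ n - w⁻¹ ^ n := by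
  have h := congrArg det (smul_one_sub_weightedCycle_mul_cycleShift (n := n) hu hw)
  rw [det_mul, det_cycleShift, det_smul, det_mul, det_smul_one_sub_smul_cycleShift,
    det_smul_one_sub_smul_cycleShift, Fintype.card_fin] at h
  rw [eval_charpoly, scalar_apply, ← smul_one_eq_diagonal]
  have hu' : u ^ n * u⁻¹ ^ n = 1 := by rw [← mul_pow, mul_inv_cancel₀ hu, one_pow]
  have hw' : w ^ n * w⁻¹ ^ n = 1 := by rw [← mul_pow, mul_inv_cancel₀ hw, one_pow]
  refine mul_left_cancel₀ (pow_ne_zero n (neg_ne_zero.2 (one_ne_zero (α := K)))) ?_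
  linear_combination -h - (-1) ^ n * w⁻¹ ^ n * hu' + (-1) ^ n * (u ^ n + u⁻¹ ^ n - w ^ n) * hw'

lemma _root_.IsAlgClosed.exists_add_inv_eq [IsAlgClosed K] (x : K) : ∃ u ≠ 0, u + u⁻¹ = x := by
  obtain ⟨u, hu⟩ := IsAlgClosed.exists_root (X ^ 2 - C x * X + 1 : K[X])
    (by rw [show (X ^ 2 - C x * X + 1 : K[X]).degree = 2 by compute_degree!]; decide)
  have hroot : u ^ 2 - x * u + 1 = 0 := by simpa using hu
  have hu0 : u ≠ 0 := by
    rintro rfl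
    simp at hroot
  exact ⟨u, hu0, by field_simp; linear_combination hroot⟩

theorem charpoly_weightedCycle_add_C [IsAlgClosed K] {w w' : K} (hw : w ≠ 0) (hw' : w' ≠ 0) :
    (weightedCycle K n w).charpoly + C (w ^ n + w⁻¹ ^ n) =
      (weightedCycle K n w').charpoly + C (w' ^ n + w'⁻¹ ^ n) := by
  refine Polynomial.funext fun x => ?_
  obtain ⟨u, hu, rfl⟩ := IsAlgClosed.exists_add_inv_eq x
  simp only [eval_add, eval_C, eval_add_inv_charpoly_weightedCycle hu hw,
    eval_add_inv_charpoly_weightedCycle hu hw']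
  ring

end WeightedCycle

section Gauge

variable {n : ℕ} [NeZero n]

lemma Fin.val_eq_val_add_one_mod_iff (j k : Fin n) : (k : ℕ) = ((j : ℕ) + 1) % n ↔ j + 1 = k := by
  rw [eq_comm (a := j + 1), Fin.ext_iff, Fin.val_add, Fin.val_one', Nat.add_mod_mod]

lemma exists_cycle_potential (α : Fin n → ℝ) :
    ∃ φ : Fin n → ℝ, ∀ j, α j + φ (j + 1) = φ j + (∑ i, α i) / n := by
  set a : ℕ → ℝ := fun l => if h : l < n then α ⟨l, h⟩ else 0
  have ha : ∀ j : Fin n, a j = α j := fun j => by simp [a]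
  have hsum : ∑ i, α i = ∑ l ∈ Finset.range n, a l := by
    rw [← Fin.sum_univ_eq_sum_range]
    simp [ha]
  refine ⟨fun j => j * (∑ i, α i) / n - ∑ l ∈ Finset.range j, a l, fun j => ?_⟩
  dsimp only
  have hj1 : ((j + 1 : Fin n) : ℕ) = ((j : ℕ) + 1) % n :=
    (Fin.val_eq_val_add_one_mod_iff j (j + 1)).2 rfl
  rcases Nat.lt_or_eq_of_le (Nat.succ_le_of_lt j.isLt) with h | h
  · rw [hj1, Nat.mod_eq_of_lt h, Finset.sum_range_succ, ha]
    push_cast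
    field_simp
    ring
  · rw [Nat.succ_eq_add_one] at h
    have hsplit : ∑ l ∈ Finset.range n, a l = ∑ l ∈ Finset.range j, a l + α j := by
      rw [← ha, ← Finset.sum_range_succ, h]
    have hnj : (n : ℝ) = j + 1 := by exact_mod_cast h.symm
    rw [hj1, h, Nat.mod_self, hsum, hsplit, hnj]
    push_cast
    field_simp
    ring

lemma cycleH_mul_diagonal_exp (α φ : Fin n → ℝ) (c : ℝ) (hφ : ∀ j, α j + φ (j + 1) = φ j + c) :
    cycleH n α * diagonal (fun j => exp (I * φ j)) =
      diagonal (fun j => exp (I * φ j)) * weightedCycle ℂ n (exp (I * c)) := by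
  have hφ' : ∀ j, I * α j + I * φ (j + 1) = I * φ j + I * c := fun j => by
    simp only [← mul_add, ← ofReal_add, hφ j]
  ext j k
  simp only [mul_diagonal, diagonal_mul, cycleH, weightedCycle, Matrix.add_apply,
    Matrix.smul_apply, transpose_apply, cycleShift_apply, Fin.val_eq_val_add_one_mod_iff,
    smul_eq_mul, add_mul, mul_add, ite_mul, mul_ite, zero_mul, mul_zero, mul_one, ← exp_neg]
  congr 1
  · split_ifs with h
    · rw [← h, ← exp_add, ← exp_add, hφ']
    · rfl
  · split_ifs with h
    · rw [← h, ← exp_add, ← exp_add]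
      congr 1
      linear_combination -hφ' k
    · rfl

lemma charpoly_cycleH (α : Fin n → ℝ) :
    (cycleH n α).charpoly = (weightedCycle ℂ n (exp (I * ((∑ j, α j) / n : ℝ)))).charpoly := by
  obtain ⟨φ, hφ⟩ := exists_cycle_potential α
  set D := diagonal fun j => exp (I * φ j)
  have hD : IsUnit D := isUnit_diagonal.2 (Pi.isUnit_iff.2 fun j => (exp_ne_zero _).isUnit)
  have hconj : cycleH n α = D * weightedCycle ℂ n (exp (I * ((∑ j, α j) / n : ℝ))) * D⁻¹ := by
    rw [← cycleH_mul_diagonal_exp α φ _ hφ,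
      mul_nonsing_inv_cancel_right _ _ ((isUnit_iff_isUnit_det _).1 hD)]
  rw [hconj, ← hD.unit_spec, charpoly_units_conj]

lemma cycleAdj_eq_weightedCycle_one : cycleAdj n = weightedCycle ℂ n 1 := by
  ext j k
  simp [cycleAdj, weightedCycle, cycleShift_apply, Fin.val_eq_val_add_one_mod_iff]

end Gauge

theorem charpoly_oriented_even_cycle_general (m : ℕ) (α : Fin (2 * m) → ℝ)
    (hα : ∑ j, α j = Real.pi) :
    (cycleH (2 * m) α).charpoly = (cycleAdj (2 * m)).charpoly + 4 := by
  have hm : m ≠ 0 := by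
    rintro rfl
    exact Real.pi_ne_zero (by simpa using hα.symm)
  have : NeZero (2 * m) := ⟨by omega⟩
  set w := exp (I * ((∑ j, α j) / (2 * m : ℕ) : ℝ))
  have hw : w ^ (2 * m) = -1 := by
    have : (m : ℂ) ≠ 0 := Nat.cast_ne_zero.2 hm
    rw [← exp_nat_mul, hα, ← exp_pi_mul_I]
    congr 1
    push_cast
    field_simp
  have h := charpoly_weightedCycle_add_C (n := 2 * m) (exp_ne_zero _ : w ≠ 0) one_ne_zero
  rw [inv_pow, hw, inv_neg, inv_one] at h
  simp only [one_pow, map_add, map_neg, map_one] at h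
  rw [charpoly_cycleH, cycleAdj_eq_weightedCycle_one]
  linear_combination h

/-- If the weights of an oriented even cycle `C_{2m}` satisfy `∑ α j = π` (i.e. the product
of the weights around the cycle is `-1`), then the characteristic polynomial of the
Hermitian adjacency matrix equals that of the undirected cycle plus the constant `4`. -/
theorem charpoly_oriented_even_cycle (m : ℕ) (hm : 2 ≤ m) (α : Fin (2 * m) → ℝ)
    (hα : ∑ j, α j = Real.pi) :
    (cycleH (2 * m) α).charpoly = (cycleAdj (2 * m)).charpoly + 4 :=
  charpoly_oriented_even_cycle_general m α hα
end

section
/- Let n = 2m and let H_α be the Hermitian adjacency matrix of an oriented n-cycle whose edge weights e^{iα(j)} satisfy Σ_j α(j) = π. Then the characteristic polynomial of H_α equals (2·T_m(x/2))^2, where T_m is the m-th Chebyshev polynomial of the first kind. -/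
/-!
Write `H_α = S + Sᴴ`, where `S` is the weighted cyclic shift with weights `w j = exp (i α j)`.
Expanding the determinant over permutations, only the identity and the rotation contribute,
so `charpoly S = X ^ n - ∏ w = X ^ n + 1` because `∑ α = π`; in particular `det S = 1` for even
`n`. Since `S` is unitary, `(a + b - S - Sᴴ) S = -(a - S)(b - S)` whenever `a b = 1`; taking
`a = exp (iθ)`, `b = exp (-iθ)` gives
`charpoly H_α (2 cos θ) = (a ^ n + 1)(b ^ n + 1) = (a ^ m + b ^ m) ^ 2 = (2 cos (mθ)) ^ 2`,
which is `(2 T_m(cos θ)) ^ 2`. Every complex number is of the form `2 cos θ`.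
-/

open Polynomial

open scoped Fin.NatCast

namespace Equiv.Perm

lemma eq_one_or_eq_subRight_one {n : ℕ} [NeZero n] (σ : Perm (Fin n))
    (hσ : ∀ i, σ i = i ∨ σ i = i - 1) : σ = 1 ∨ σ = Equiv.subRight 1 := by
  by_cases hfix : ∀ i, σ i = i
  · exact Or.inl (Equiv.ext hfix)
  push Not at hfix
  obtain ⟨a, ha⟩ := hfix
  -- injectivity propagates `σ i = i - 1` backwards around the cycle
  have hstep : ∀ i, σ i = i - 1 → σ (i - 1) = i - 1 - 1 := fun i hi =>
    (hσ (i - 1)).elim (fun h => h.trans (congrArg (· - 1) (σ.injective (hi.trans h.symm)))) id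
  have hall : ∀ k : ℕ, σ (a - k) = a - k - 1 := by
    intro k
    induction k with
    | zero => simpa using (hσ a).resolve_left ha
    | succ k ih => simpa [sub_sub] using hstep _ ih
  refine Or.inr (Equiv.ext fun i => ?_)
  simpa using hall (a - i : Fin n).val

lemma sign_subRight_one (n : ℕ) [NeZero n] :
    sign (Equiv.subRight (1 : Fin n)) = (-1) ^ (n - 1) := by
  rw [← sign_finRotate, ← sign_inv]
  congr 1
  ext i
  simp [finRotate_apply]

end Equiv.Perm

lemma add_sub_add_mul_eq_neg_sub_mul_sub {A : Type*} [Ring A] {a b S T : A} (hb : Commute b S)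
    (hab : a * b = 1) (hTS : T * S = 1) : (a + b - (S + T)) * S = -((a - S) * (b - S)) := by
  rw [sub_mul, add_mul, add_mul, hTS, mul_sub, sub_mul, sub_mul, hab, hb.eq]
  abel

namespace Matrix

variable {R : Type*} {n : ℕ} [NeZero n]

lemma det_eq_of_cyclic_bidiagonal [CommRing R] (hn : 1 < n) (M : Matrix (Fin n) (Fin n) R)
    (hM : ∀ i j, j ≠ i → j ≠ i + 1 → M i j = 0) :
    M.det = ∏ i, M i i + (-1) ^ (n - 1) * ∏ i, M i (i + 1) := by
  have hsub : ∀ i : Fin n, i - 1 ≠ i := fun i h =>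
    (Fin.one_eq_zero_iff.not.2 hn.ne') (by simpa using h)
  have hrot : (1 : Equiv.Perm (Fin n)) ≠ Equiv.subRight 1 := fun h =>
    hsub 0 (DFunLike.congr_fun h 0).symm
  have hreindex : ∏ i, M (i - 1) i = ∏ i, M i (i + 1) :=
    (Fintype.prod_equiv (Equiv.addRight 1) _ _ fun i => by simp).symm
  rw [det_apply, Fintype.sum_eq_add _ _ hrot]
  · simp [Equiv.Perm.sign_subRight_one, Units.smul_def, hreindex]
  · rintro σ ⟨hσ1, hσrot⟩
    obtain ⟨i, hi, hi'⟩ : ∃ i, σ i ≠ i ∧ σ i ≠ i - 1 := by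
      by_contra! h
      exact (σ.eq_one_or_eq_subRight_one fun i => or_iff_not_imp_left.2 (h i)).elim hσ1 hσrot
    refine smul_eq_zero_of_right _ (Finset.prod_eq_zero (Finset.mem_univ i) (hM _ _ ?_ ?_))
    · exact fun h => hi h.symm
    · exact fun h => hi' (eq_sub_of_add_eq h.symm)

def weightedShift [Zero R] (w : Fin n → R) : Matrix (Fin n) (Fin n) R :=
  of fun i j => if j = i + 1 then w i else 0

@[simp]
lemma weightedShift_apply [Zero R] (w : Fin n → R) (i j : Fin n) :
    weightedShift w i j = if j = i + 1 then w i else 0 := rfl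

lemma charpoly_weightedShift [CommRing R] (w : Fin n → R) :
    (weightedShift w).charpoly = X ^ n - C (∏ i, w i) := by
  obtain rfl | hn := (Nat.one_le_iff_ne_zero.2 (NeZero.ne n)).eq_or_lt
  · simp [charpoly, det_unique, charmatrix_apply_eq]
  have hodd : Odd (n - 1 + n) := ⟨n - 1, by omega⟩
  rw [charpoly, det_eq_of_cyclic_bidiagonal hn]
  · simp [charmatrix_apply_eq, charmatrix_apply_ne, Finset.prod_neg, hn.ne', ← mul_assoc,
      ← pow_add, hodd.neg_one_pow, ← sub_eq_add_neg]
  · intro i j hji hj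
    simp [charmatrix_apply_ne _ _ _ hji.symm, hj]

lemma conjTranspose_weightedShift_mul_self [Semiring R] [StarRing R] (w : Fin n → R)
    (hw : ∀ i, star (w i) * w i = 1) : (weightedShift w)ᴴ * weightedShift w = 1 := by
  ext i j
  simp only [mul_apply, conjTranspose_apply, weightedShift_apply, ← sub_eq_iff_eq_add]
  by_cases h : i = j <;> simp [one_apply, h, hw]

lemma eval_charpoly_add_mul_det {ι : Type*} [CommRing R] [Fintype ι] [DecidableEq ι]
    (S T : Matrix ι ι R) (hTS : T * S = 1) {a b : R} (hab : a * b = 1) :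
    (S + T).charpoly.eval (a + b) * S.det =
      (-1) ^ Fintype.card ι * (S.charpoly.eval a * S.charpoly.eval b) := by
  rw [eval_charpoly, eval_charpoly, eval_charpoly, ← det_mul, ← det_mul, ← det_neg, map_add]
  refine congrArg det (add_sub_add_mul_eq_neg_sub_mul_sub (scalar_commute b (.all b) S) ?_ hTS)
  rw [← map_mul, hab, map_one]

end Matrix

open Matrix Complex

lemma Polynomial.Chebyshev.two_mul_T_complex_cos (θ : ℂ) (m : ℕ) :
    2 * (T ℂ m).eval (cos θ) = exp (θ * I) ^ m + exp (-θ * I) ^ m := by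
  rw [T_complex_cos, two_cos, ← exp_nat_mul, ← exp_nat_mul]
  push_cast
  ring_nf

lemma cycleH_eq_weightedShift_add_conjTranspose (n : ℕ) [NeZero n] (α : Fin n → ℝ) :
    cycleH n α = weightedShift (fun j => exp (I * α j)) +
      (weightedShift fun j => exp (I * α j))ᴴ := by
  have hsucc : ∀ j k : Fin n, (k : ℕ) = ((j : ℕ) + 1) % n ↔ k = j + 1 := fun j k => by
    rw [Fin.ext_iff, Fin.val_add, Fin.val_one', Nat.add_mod_mod]
  ext j k
  simp only [cycleH, hsucc, Matrix.add_apply, conjTranspose_apply, weightedShift_apply]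
  split_ifs <;> simp [← Complex.exp_conj]

theorem charpoly_oriented_even_cycle_chebyshev_general (m : ℕ)
    (α : Fin (2 * m) → ℝ) (hα : ∑ j, α j = Real.pi) :
    (cycleH (2 * m) α).charpoly =
      ((2 : ℂ[X]) * (Polynomial.Chebyshev.T ℂ (m : ℤ)).comp
        (Polynomial.C (2⁻¹ : ℂ) * Polynomial.X)) ^ 2 := by
  have hm0 : m ≠ 0 := by
    rintro rfl
    simp [Real.pi_ne_zero.symm] at hα
  have : NeZero (2 * m) := ⟨by omega⟩
  set S := weightedShift fun j => exp (I * α j)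
  have hS : S.charpoly = X ^ (2 * m) + 1 := by
    rw [charpoly_weightedShift, ← exp_sum, ← Finset.mul_sum, ← ofReal_sum, hα, mul_comm I,
      exp_pi_mul_I, map_neg, map_one, sub_neg_eq_add]
  have hdet : S.det = 1 := by simp [det_eq_sign_charpoly_coeff, hS, hm0]
  have hunitary : Sᴴ * S = 1 :=
    conjTranspose_weightedShift_mul_self _ fun j => by simp [← Complex.exp_conj, ← exp_add]
  refine Polynomial.funext fun x => ?_
  obtain ⟨θ, hθ⟩ := cos_surjective (x / 2)
  obtain rfl : x = 2 * cos θ := by rw [hθ]; ring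
  have key := eval_charpoly_add_mul_det S Sᴴ hunitary (a := exp (θ * I)) (b := exp (-θ * I))
    (by rw [← exp_add]; simp)
  rw [← two_cos, hdet, mul_one, hS] at key
  have hab : exp (θ * I) ^ m * exp (-θ * I) ^ m = 1 := by rw [← mul_pow, ← exp_add]; simp
  rw [cycleH_eq_weightedShift_add_conjTranspose, key]
  simp only [eval_pow, eval_mul, eval_comp, eval_C, eval_X, eval_ofNat, eval_add, eval_one,
    Fintype.card_fin, (even_two_mul m).neg_one_pow, inv_mul_cancel_left₀ (two_ne_zero' ℂ),
    Chebyshev.two_mul_T_complex_cos]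
  linear_combination (exp (θ * I) ^ m * exp (-θ * I) ^ m - 1) * hab

/-- If the weights of an oriented even cycle `C_{2m}` satisfy `∑ α j = π`, then the
characteristic polynomial of its Hermitian adjacency matrix equals `(2 T_m(x/2))²`,
where `T_m` is the Chebyshev polynomial of the first kind. -/
theorem charpoly_oriented_even_cycle_chebyshev (m : ℕ) (hm : 2 ≤ m)
    (α : Fin (2 * m) → ℝ) (hα : ∑ j, α j = Real.pi) :
    (cycleH (2 * m) α).charpoly =
      ((2 : ℂ[X]) * (Polynomial.Chebyshev.T ℂ (m : ℤ)).comp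
        (Polynomial.C (2⁻¹ : ℂ) * Polynomial.X)) ^ 2 :=
  charpoly_oriented_even_cycle_chebyshev_general m α hα
end

section
/- Let n = 2m and let H_α be the Hermitian adjacency matrix of an oriented n-cycle with weights satisfying Σ_j α(j) = π. Then for every vertex a and every time t ∈ ℝ, the (a+m, a) entry of the matrix exponential exp(i·t·H_α) is zero. In particular, the probability of transfer between antipodal vertices is zero for all times. -/
/-!
Reflecting the cycle through a vertex `a` (`j ↦ 2a - j`) turns `H_α` into the Hamiltonian of the
reversed, conjugated weights. Their total differs from that of `α` by `2 ∑ α = 2π`, so the two are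
gauge equivalent: a diagonal matrix of the phases accumulated along the path from `a` conjugates
one into the other. The monomial matrix `U` = gauge × reflection therefore commutes with `H_α`,
hence with `exp(itH_α)`. `U` fixes `a` and its antipode `a + m`, with phases `1` and
`exp(-iπ) = -1`, so the `(a + m, a)` entry of `exp(itH_α)` equals its own negative.
-/

namespace Matrix

variable {ι R : Type*} [Fintype ι] [DecidableEq ι] [Semiring R]

theorem commute_diagonal_mul_permMatrix_iff (M : Matrix ι ι R) (g : ι → R)
    (σ : Equiv.Perm ι) :
    Commute M (diagonal g * σ.permMatrix R) ↔ ∀ i j, g i * M (σ i) (σ j) = M i j * g j := by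
  rw [commute_iff_eq, Matrix.mul_assoc, PEquiv.toMatrix_toPEquiv_mul, ← Matrix.mul_assoc,
    PEquiv.mul_toMatrix_toPEquiv, ← Matrix.ext_iff]
  refine forall_congr' fun i => σ.forall_congr_right.symm.trans (forall_congr' fun j => ?_)
  simp [eq_comm]

end Matrix

theorem Finset.sum_range_comp_sub_one_sub {R M : Type*} [AddCommGroupWithOne R] [AddCommMonoid M]
    (f : R → M) (a : R) (m : ℕ) :
    ∑ i ∈ Finset.range m, f (a - 1 - i) = ∑ i ∈ Finset.range m, f (a - m + i) := by
  rw [← Finset.sum_range_reflect]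
  refine Finset.sum_congr rfl fun i hi => congrArg f ?_
  rw [Nat.sub_sub, Nat.cast_sub (by grind), Nat.cast_add, Nat.cast_one]
  abel

section Cycle

open Fin.CommRing

variable {n : ℕ} [NeZero n]

theorem Fin.neg_natCast_eq_self_of_two_mul (m : ℕ) [NeZero m] : -(m : Fin (2 * m)) = m := by
  rw [neg_eq_iff_add_eq_zero, ← Nat.cast_add, ← two_mul, Fin.natCast_self]

theorem cycleH_apply (α : Fin n → ℝ) (j k : Fin n) :
    cycleH n α j k = (if k = j + 1 then Complex.exp (Complex.I * α j) else 0) +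
      (if j = k + 1 then Complex.exp (-(Complex.I * α k)) else 0) := by
  have val_eq_iff (p q : Fin n) : (q : ℕ) = ((p : ℕ) + 1) % n ↔ q = p + 1 := by
    rw [Fin.ext_iff, Fin.val_add, Fin.val_one', Nat.add_mod_mod]
  simp only [cycleH, val_eq_iff]

theorem Fin.sum_range_add_left {M : Type*} [AddCommMonoid M] (f : Fin n → M) (a : Fin n) :
    ∑ i ∈ Finset.range n, f (a + i) = ∑ j, f j := by
  rw [← Fin.sum_univ_eq_sum_range (fun i : ℕ => f (a + i)) n]
  simp only [Fin.cast_val_eq_self]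
  exact Fintype.sum_equiv (Equiv.addLeft a) _ _ fun _ => rfl

noncomputable def cycleGauge (w : Fin n → ℝ) (a j : Fin n) : ℂ :=
  Complex.exp (-(Complex.I * ((∑ i ∈ Finset.range ((j - a : Fin n) : ℕ), w (a + i) : ℝ) : ℂ)))

theorem cycleGauge_self (w : Fin n → ℝ) (a : Fin n) : cycleGauge w a a = 1 := by
  simp [cycleGauge]

theorem cycleGauge_add_one {w : Fin n → ℝ} (hw : ∑ j, w j = 2 * Real.pi) (a j : Fin n) :
    cycleGauge w a (j + 1) = cycleGauge w a j * Complex.exp (-(Complex.I * w j)) := by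
  rw [cycleGauge, cycleGauge, ← Complex.exp_add]
  set d : ℕ := ((j - a : Fin n) : ℕ) with hd
  have hj : a + (d : Fin n) = j := by rw [hd, Fin.cast_val_eq_self]; ring
  have hval : ((j + 1 - a : Fin n) : ℕ) = (d + 1) % n := by
    rw [show j + 1 - a = (j - a) + 1 by ring, Fin.val_add, Fin.val_one', Nat.add_mod_mod]
  rw [hval]
  obtain hlt | heq := (show d + 1 ≤ n from (j - a).isLt).lt_or_eq
  · rw [Nat.mod_eq_of_lt hlt, Finset.sum_range_succ, hj]
    congr 1
    push_cast
    ring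
  · have hsum : ∑ i ∈ Finset.range d, w (a + i) + w j = 2 * Real.pi := by
      rw [← hj, ← Finset.sum_range_succ, heq, Fin.sum_range_add_left, hw]
    rw [heq, Nat.mod_self, Finset.sum_range_zero, ← neg_add, ← mul_add, ← Complex.ofReal_add,
      hsum, Complex.ofReal_zero, mul_zero, neg_zero, Complex.exp_zero, Complex.exp_neg,
      Complex.ofReal_mul, Complex.ofReal_ofNat, mul_comm, Complex.exp_two_pi_mul_I, inv_one]

/-- The weight of the edge `j → j + 1` plus that of its mirror image `a + a - (j + 1) → a + a - j`
under the reflection through `a`. -/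
def mirrorWeight (α : Fin n → ℝ) (a j : Fin n) : ℝ :=
  α j + α (a + a - (j + 1))

theorem sum_mirrorWeight (α : Fin n → ℝ) (a : Fin n) :
    ∑ j, mirrorWeight α a j = 2 * ∑ j, α j := by
  have hmirror : ∑ j, α (a + a - (j + 1)) = ∑ j, α j := by
    rw [← Equiv.sum_comp (Equiv.subLeft (a + a - 1)) α]
    exact Finset.sum_congr rfl fun j _ => congrArg α (by rw [Equiv.subLeft_apply]; ring)
  simp only [mirrorWeight, Finset.sum_add_distrib, hmirror, two_mul]

theorem cycleGauge_mirrorWeight_mul_cycleH (hn : 2 < n) {α : Fin n → ℝ}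
    (hα : ∑ j, α j = Real.pi) (a j k : Fin n) :
    cycleGauge (mirrorWeight α a) a j * cycleH n α (a + a - j) (a + a - k) =
      cycleH n α j k * cycleGauge (mirrorWeight α a) a k := by
  have hg := cycleGauge_add_one (w := mirrorWeight α a) (by rw [sum_mirrorWeight, hα]) a
  have hback : a + a - k = a + a - j + 1 ↔ j = k + 1 := by
    constructor <;> intro h <;> linear_combination h
  have hfwd : a + a - j = a + a - k + 1 ↔ k = j + 1 := by
    constructor <;> intro h <;> linear_combination h
  have hne (x : Fin n) : x ≠ x + 1 + 1 := fun h => by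
    have h2 : ((2 : Fin n) : ℕ) = 0 := by rw [show (2 : Fin n) = 0 by linear_combination -h]; rfl
    simp [Nat.mod_eq_of_lt hn] at h2
  rw [cycleH_apply, cycleH_apply, if_congr hback rfl rfl, if_congr hfwd rfl rfl]
  by_cases hjk : j = k + 1
  · subst hjk
    rw [if_pos rfl, if_neg (hne k), if_neg (hne k), if_pos rfl, add_zero, zero_add, hg,
      mul_comm _ (cycleGauge _ _ k), mul_assoc, ← Complex.exp_add, mirrorWeight]
    congr 2
    push_cast
    ring
  by_cases hkj : k = j + 1
  · subst hkj
    rw [if_pos rfl, if_neg (hne j), if_neg (hne j), if_pos rfl, add_zero, zero_add, hg,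
      mul_left_comm, ← Complex.exp_add, mirrorWeight]
    congr 2
    push_cast
    ring
  simp [hjk, hkj]

theorem cycleGauge_mirrorWeight_antipode {m : ℕ} [NeZero m] (α : Fin (2 * m) → ℝ)
    (a : Fin (2 * m)) :
    cycleGauge (mirrorWeight α a) a (a + m) =
      Complex.exp (-(Complex.I * ((∑ j, α j : ℝ) : ℂ))) := by
  have hm : ((m : Fin (2 * m)) : ℕ) = m := Fin.val_cast_of_lt (by grind [NeZero.pos m])
  rw [cycleGauge, add_sub_cancel_left, hm]
  congr 4
  calc ∑ i ∈ Finset.range m, mirrorWeight α a (a + i)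
      = ∑ i ∈ Finset.range m, α (a + i) + ∑ i ∈ Finset.range m, α (a - 1 - i) := by
        rw [← Finset.sum_add_distrib]
        exact Finset.sum_congr rfl fun i _ => by rw [mirrorWeight]; ring_nf
    _ = ∑ i ∈ Finset.range m, α (a + i) + ∑ i ∈ Finset.range m, α (a + m + i) := by
        rw [Finset.sum_range_comp_sub_one_sub, sub_eq_add_neg, Fin.neg_natCast_eq_self_of_two_mul]
    _ = ∑ i ∈ Finset.range (m + m), α (a + i) := by
        rw [Finset.sum_range_add]
        push_cast
        simp only [add_assoc]
    _ = ∑ j, α j := by rw [← two_mul, Fin.sum_range_add_left]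

end Cycle

/-- **Zero transfer between antipodal vertices.** If the weights of an oriented even
cycle `C_{2m}` satisfy `∑ α j = π`, then for every vertex `a` and every time `t`, the
`(a + m, a)` entry of the transition matrix `exp(i t H_α)` vanishes: the probability of
transfer between antipodal vertices is zero at all times. -/
theorem zero_transfer_oriented_even_cycle (m : ℕ) (hm : 2 ≤ m)
    (α : Fin (2 * m) → ℝ) (hα : ∑ j, α j = Real.pi)
    (a : Fin (2 * m)) (t : ℝ) :
    NormedSpace.exp ((Complex.I * t) • cycleH (2 * m) α)
      (⟨((a : ℕ) + m) % (2 * m), Nat.mod_lt _ (by omega)⟩) a = 0 := by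
  have : NeZero m := ⟨by omega⟩
  open Fin.CommRing in
  have hb : (⟨((a : ℕ) + m) % (2 * m), Nat.mod_lt _ (by omega)⟩ : Fin (2 * m)) = a + m := by
    rw [Fin.ext_iff, Fin.val_add, Fin.val_natCast, Nat.add_mod_mod]
  open Fin.CommRing in
  have hσ : a + a - (a + m) = a + m := by
    rw [add_sub_add_left_eq_sub, sub_eq_add_neg, Fin.neg_natCast_eq_self_of_two_mul]
  have hH := (Matrix.commute_diagonal_mul_permMatrix_iff _ _ (Equiv.subLeft (a + a))).mpr
    (cycleGauge_mirrorWeight_mul_cycleH (by omega) hα a)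
  have hE := (Matrix.commute_diagonal_mul_permMatrix_iff _ _ _).mp
    ((hH.smul_left (Complex.I * t)).exp_left) (a + m) a
  simp only [Equiv.subLeft_apply, hσ, add_sub_cancel_right, cycleGauge_self,
    cycleGauge_mirrorWeight_antipode, hα, Complex.exp_neg, mul_comm Complex.I (Real.pi : ℂ),
    Complex.exp_pi_mul_I] at hE
  rw [hb]
  linear_combination (-1 / 2 : ℂ) * hE
end

section
/- Let H_α be the Hermitian adjacency matrix of an oriented tree T (each edge weighted by a complex number of modulus 1 in one direction and its conjugate in the other) and H_0 the adjacency matrix of the underlying undirected tree. Then for all t ∈ ℝ and all vertices a, b, |(exp(i t H_α))_{b,a}| = |(exp(i t H_0))_{b,a}|. In particular, adding orientations to a tree does not change vertex-to-vertex transfer probabilities. -/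
/-!
Root the tree at `r` and let `f a` be the product of the edge weights of `Hα` along the unique
path from `r` to `a`. Since the weights lie on the unit circle and `Hα b a = conj (Hα a b)`,
every edge weight is the gauge factor `conj (f a) * f b`, i.e. `Hα = D⋆ H₀ D` for the diagonal
unitary `D = diag f`. Then `exp (i t Hα) = D⋆ exp (i t H₀) D`, and conjugating by a diagonal
unitary only multiplies each entry by a phase.
-/

open Matrix

theorem Circle.coe_mem_unitary (z : Circle) : (z : ℂ) ∈ unitary ℂ := by
  rw [Unitary.mem_iff, Complex.star_def, ← Circle.coe_inv_eq_conj, ← Circle.coe_mul,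
    ← Circle.coe_mul, inv_mul_cancel, mul_inv_cancel, Circle.coe_one]
  exact ⟨rfl, rfl⟩

namespace Matrix

variable {m : Type*} [Fintype m] [DecidableEq m]

theorem star_diagonal_mul_mul_diagonal_apply {R : Type*} [Semiring R] [StarRing R]
    (d : m → R) (A : Matrix m m R) (i j : m) :
    (star (diagonal d) * A * diagonal d) i j = star (d i) * A i j * d j := by
  simp [star_eq_conjTranspose, diagonal_conjTranspose, mul_diagonal, diagonal_mul]

theorem diagonal_mem_unitary {R : Type*} [Semiring R] [StarRing R] {d : m → R}
    (hd : ∀ i, d i ∈ unitary R) : diagonal d ∈ unitary (Matrix m m R) := by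
  simp only [Unitary.mem_iff, star_eq_conjTranspose, diagonal_conjTranspose,
    diagonal_mul_diagonal]
  constructor <;> convert diagonal_one <;> simp [hd]

theorem exp_star_mul_mul_of_mem_unitary {𝔸 : Type*} [NormedRing 𝔸] [NormedAlgebra ℚ 𝔸]
    [CompleteSpace 𝔸] [StarRing 𝔸] {U : Matrix m m 𝔸} (hU : U ∈ unitary (Matrix m m 𝔸))
    (A : Matrix m m 𝔸) : NormedSpace.exp (star U * A * U) = star U * NormedSpace.exp A * U :=
  exp_units_conj' (Unitary.toUnits ⟨U, hU⟩) A

theorem norm_star_diagonal_mul_mul_diagonal_apply (f : m → Circle) (A : Matrix m m ℂ)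
    (i j : m) :
    ‖(star (diagonal fun k => (f k : ℂ)) * A * diagonal fun k => (f k : ℂ)) i j‖ = ‖A i j‖ := by
  rw [star_diagonal_mul_mul_diagonal_apply, norm_mul, norm_mul, norm_star, Circle.norm_coe,
    Circle.norm_coe, one_mul, mul_one]

end Matrix

namespace SimpleGraph

variable {V : Type*} {G : SimpleGraph V}

theorem IsAcyclic.eq_concat_or_eq_concat (hG : G.IsAcyclic) {r a b : V} {p : G.Walk r a}
    {q : G.Walk r b} (hp : p.IsPath) (hq : q.IsPath) (hab : G.Adj a b) :
    q = p.concat hab ∨ p = q.concat hab.symm := by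
  by_cases ha : a ∈ q.support
  · exact .inl (hG.path_concat hp hq hab ha)
  · exact .inr (hG.path_concat hq hp hab.symm
      (hG.mem_support_of_ne_mem_support_of_adj_of_isPath hp hq hab ha))

theorem IsTree.exists_forall_adj_eq_inv_mul {Γ : Type*} [Group Γ] (hG : G.IsTree)
    (w : V → V → Γ) (hw : ∀ a b, G.Adj a b → w b a = (w a b)⁻¹) :
    ∃ f : V → Γ, ∀ a b, G.Adj a b → w a b = (f a)⁻¹ * f b := by
  obtain ⟨r⟩ := hG.connected.nonempty
  choose P hP _ using hG.existsUnique_path r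
  refine ⟨fun a => ((P a).darts.map fun d => w d.fst d.snd).prod, fun a b hab => ?_⟩
  rcases hG.isAcyclic.eq_concat_or_eq_concat (hP a) (hP b) hab with h | h
  · simp [h, Walk.darts_concat]
  · simp [h, Walk.darts_concat, hw a b hab, mul_assoc]

theorem IsTree.exists_eq_star_diagonal_mul_adjMatrix_mul_diagonal [Fintype V] [DecidableEq V]
    [DecidableRel G.Adj] (hG : G.IsTree) {H : Matrix V V ℂ} (hHerm : H.IsHermitian)
    (hdiag : ∀ a, H a a = 0) (hsupp : ∀ a b, a ≠ b → ¬ G.Adj a b → H a b = 0)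
    (hmod : ∀ a b, G.Adj a b → ‖H a b‖ = 1) :
    ∃ f : V → Circle,
      H = star (diagonal fun a => (f a : ℂ)) * G.adjMatrix ℂ * diagonal fun a => (f a : ℂ) := by
  let w : V → V → Circle := fun a b =>
    if h : G.Adj a b then ⟨H a b, mem_sphere_zero_iff_norm.2 (hmod a b h)⟩ else 1
  have hwH : ∀ a b, G.Adj a b → (w a b : ℂ) = H a b := fun a b hab => by
    simp [w, hab]
  have hw : ∀ a b, G.Adj a b → w b a = (w a b)⁻¹ := fun a b hab => by
    ext
    rw [Circle.coe_inv_eq_conj, hwH a b hab, hwH b a hab.symm]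
    exact (hHerm.apply b a).symm
  obtain ⟨f, hf⟩ := hG.exists_forall_adj_eq_inv_mul w hw
  refine ⟨f, Matrix.ext fun a b => ?_⟩
  rw [star_diagonal_mul_mul_diagonal_apply]
  by_cases hab : G.Adj a b
  · have hfab := congrArg (fun z : Circle => (z : ℂ)) (hf a b hab)
    rw [hwH a b hab, Circle.coe_mul, Circle.coe_inv_eq_conj] at hfab
    simp [hab, hfab]
  · obtain rfl | hne := eq_or_ne a b
    · simp [hdiag]
    · simp [hab, hsupp a b hne hab]

end SimpleGraph

/-- **Orientations do not affect transfer probabilities on trees.**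
Let `T` be a tree, `Hα` a Hermitian matrix with zero diagonal supported on the edges of
`T` with modulus-`1` weights on the edges, and `H₀` the adjacency matrix of `T`.  Then
for all times `t` and vertices `a`, `b`, the moduli of the `(b,a)` entries of
`exp(i t Hα)` and `exp(i t H₀)` agree. -/
theorem oriented_tree_same_transfer_probability {V : Type*} [Fintype V] [DecidableEq V]
    (T : SimpleGraph V) [DecidableRel T.Adj] (hT : T.IsTree)
    (Hα : Matrix V V ℂ) (hHerm : Hα.IsHermitian)
    (hdiag : ∀ a : V, Hα a a = 0)
    (hsupp : ∀ a b : V, a ≠ b → ¬ T.Adj a b → Hα a b = 0)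
    (hmod : ∀ a b : V, T.Adj a b → ‖Hα a b‖ = 1)
    (H₀ : Matrix V V ℂ) (hH₀ : H₀ = fun a b : V => if T.Adj a b then (1 : ℂ) else 0) :
    ∀ (t : ℝ) (a b : V),
      ‖NormedSpace.exp ((Complex.I * t) • Hα) b a‖ =
      ‖NormedSpace.exp ((Complex.I * t) • H₀) b a‖ := by
  obtain rfl : H₀ = T.adjMatrix ℂ := hH₀
  obtain ⟨f, hf⟩ := hT.exists_eq_star_diagonal_mul_adjMatrix_mul_diagonal hHerm hdiag hsupp hmod
  have hD : (diagonal fun a => (f a : ℂ)) ∈ unitary (Matrix V V ℂ) :=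
    diagonal_mem_unitary fun a => (f a).coe_mem_unitary
  intro t a b
  rw [hf, ← Matrix.smul_mul, ← Matrix.mul_smul, exp_star_mul_mul_of_mem_unitary hD,
    norm_star_diagonal_mul_mul_diagonal_apply]
end

section
/- The characteristic polynomial of the adjacency matrix of the path graph P_n equals U_n(x/2), where U_n is the n-th Chebyshev polynomial of the second kind. -/
open Polynomial

/-- The adjacency matrix of the path graph on `n` vertices, over `ℚ`. -/
def pathAdj (n : ℕ) : Matrix (Fin n) (Fin n) ℚ :=
  fun i j => if (i : ℕ) + 1 = j ∨ (j : ℕ) + 1 = i then 1 else 0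

lemma submatrix_one (n : ℕ) :
    (Matrix.charmatrix (pathAdj (n+2))).submatrix Fin.succ Fin.succ
      = Matrix.charmatrix (pathAdj (n+1)) := by
  ext i j
  simp only [Matrix.submatrix_apply, Matrix.charmatrix_apply, pathAdj,
    Matrix.diagonal_apply, Matrix.map_apply, Fin.succ_inj, Fin.val_succ]
  congr 2
  simp [Nat.succ_inj]

lemma recur (n : ℕ) :
    (pathAdj (n+2)).charpoly
      = X * (pathAdj (n+1)).charpoly - (pathAdj n).charpoly := by
  rw [Matrix.charpoly, Matrix.det_succ_row_zero, Fin.sum_univ_succ, Fin.sum_univ_succ]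
  have h0 : Matrix.charmatrix (pathAdj (n+2)) 0 0 = X := by
    simp [Matrix.charmatrix_apply, pathAdj]
  have h1 : Matrix.charmatrix (pathAdj (n+2)) 0 (Fin.succ 0) = -1 := by
    simp [Matrix.charmatrix_apply, pathAdj, Fin.ext_iff]
  have hrest : ∀ j : Fin n, Matrix.charmatrix (pathAdj (n+2)) 0 j.succ.succ = 0 := by
    intro j
    have h1 : ((0:Fin (n+2)) : ℕ) + 1 ≠ (j.succ.succ : ℕ) := by simp
    have h2 : ((j.succ.succ : Fin (n+2)) : ℕ) + 1 ≠ ((0:Fin (n+2)) : ℕ) := by simp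
    have hne : (0 : Fin (n+2)) ≠ j.succ.succ := by simp [Fin.ext_iff]
    simp [Matrix.charmatrix_apply, pathAdj, Matrix.diagonal_apply, hne, h1, h2]
  rw [h0, h1]
  rw [Finset.sum_eq_zero (fun j _ => by rw [hrest]; ring)]
  rw [Fin.succAbove_zero, submatrix_one]
  -- second term: expand along first column
  have hN : ((Matrix.charmatrix (pathAdj (n+2))).submatrix Fin.succ
      ((Fin.succ 0 : Fin (n+2)).succAbove)).det
      = - (pathAdj n).charpoly := by
    rw [Matrix.det_succ_column_zero, Fin.sum_univ_succ]
    have e0 : (Matrix.charmatrix (pathAdj (n+2))).submatrix Fin.succ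
        ((Fin.succ 0 : Fin (n+2)).succAbove) 0 0 = -1 := by
      simp [Matrix.charmatrix_apply, pathAdj, Fin.ext_iff, Fin.succAbove]
    have erest : ∀ i : Fin n, (Matrix.charmatrix (pathAdj (n+2))).submatrix Fin.succ
        ((Fin.succ 0 : Fin (n+2)).succAbove) i.succ 0 = 0 := by
      intro i
      have : ((Fin.succ 0 : Fin (n+2)).succAbove 0) = 0 := by
        simp [Fin.succAbove]
      rw [Matrix.submatrix_apply, this]
      have hne : (i.succ.succ : Fin (n+2)) ≠ 0 := by simp [Fin.ext_iff]
      have h1 : ((i.succ.succ : Fin (n+2)) : ℕ) + 1 ≠ ((0:Fin (n+2)) : ℕ) := by simp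
      have h2 : ((0:Fin (n+2)) : ℕ) + 1 ≠ ((i.succ.succ : Fin (n+2)) : ℕ) := by simp
      simp [Matrix.charmatrix_apply, pathAdj, Matrix.diagonal_apply, hne, h1, h2]
    rw [e0, Finset.sum_eq_zero (fun i _ => by rw [erest]; ring)]
    have hsub : ((Matrix.charmatrix (pathAdj (n+2))).submatrix Fin.succ
        ((Fin.succ 0 : Fin (n+2)).succAbove)).submatrix
        ((0 : Fin (n+1)).succAbove) Fin.succ = Matrix.charmatrix (pathAdj n) := by
      ext i j
      have hcol : ((Fin.succ 0 : Fin (n+2)).succAbove (Fin.succ j)) = j.succ.succ := by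
        rw [Fin.succ_succAbove_succ, Fin.zero_succAbove]
      have hrow : (Fin.succ ((0 : Fin (n+1)).succAbove i)) = i.succ.succ := by
        rw [Fin.succAbove_zero]
      simp only [Matrix.submatrix_apply, hcol, hrow, Matrix.charmatrix_apply, pathAdj,
        Matrix.diagonal_apply, Matrix.map_apply, Fin.succ_inj, Fin.val_succ]
      congr 2
      simp [Nat.succ_inj]
    rw [hsub]
    rw [Matrix.charpoly]
    simp
  rw [hN, Matrix.charpoly]
  simp [Matrix.charpoly]
  ring

/-- The characteristic polynomial of the path graph `P_n` is `U_n(x/2)`,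
where `U_n` is the Chebyshev polynomial of the second kind. -/
theorem charpoly_path_eq_chebyshevU (n : ℕ) :
    (pathAdj n).charpoly =
      (Polynomial.Chebyshev.U ℚ (n : ℤ)).comp (Polynomial.C (2⁻¹ : ℚ) * Polynomial.X) := by
  induction n using Nat.strong_induction_on with
  | _ n ih =>
    match n with
    | 0 =>
      rw [Matrix.charpoly]
      simp [Matrix.det_fin_zero, Polynomial.Chebyshev.U_zero]
    | 1 =>
      rw [Matrix.charpoly]
      rw [Matrix.det_fin_one]
      have : Matrix.charmatrix (pathAdj 1) 0 0 = X := by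
        simp [Matrix.charmatrix_apply, pathAdj]
      rw [this]
      simp only [Nat.cast_one, Polynomial.Chebyshev.U_one, mul_comp, X_comp, C_comp,
        ofNat_comp]
      rw [← C_eq_natCast, ← mul_assoc, ← C_mul]
      norm_num
    | (m+2) =>
      rw [recur, ih (m+1) (by omega), ih m (by omega)]
      rw [show ((m+2:ℕ) : ℤ) = (m:ℤ) + 2 by push_cast; ring,
        Polynomial.Chebyshev.U_add_two]
      rw [show ((m+1:ℕ) : ℤ) = (m:ℤ) + 1 by push_cast; ring]
      simp only [sub_comp, mul_comp, X_comp, ofNat_comp, Nat.cast_ofNat]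
      have h2 : (2:ℚ[X]) * (C (2⁻¹:ℚ) * X) = X := by
        rw [(map_ofNat C 2).symm, ← mul_assoc, ← C_mul]
        norm_num
      rw [h2]
end
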